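/- A harmonic function f ∈ H(T,E) belongs to X(T,E) if and only if for every nonempty open set V ⊆ L⁰(∂T,E) that is not dense in L⁰(∂T,E), the set {n ∈ ℕ : ω_n(f) ∈ V} has lower density equal to zero. -/

import Mathlib

open MeasureTheory Filter Topology

/-- A rooted tree: a denumerable vertex set `V`, a level function (distance to the root),
a parent map, such that every level is finite and every vertex has at least two children,
together with a fixed enumeration of the vertices. -/
structure TreeSystem where
  V : Type
  level : V → ℕ
  root : V
  level_root : level root = 0
  root_unique : ∀ x, level x = 0 → x = root
  parent : V → V
  level_parent : ∀ x, level x ≠ 0 → level (parent x) + 1 = level x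
  levels_finite : ∀ n, {x | level x = n}.Finite
  two_children : ∀ x, ∃ y z, y ≠ z ∧ parent y = x ∧ level y = level x + 1 ∧
    parent z = x ∧ level z = level x + 1
  enum : ℕ → V
  enum_bij : Function.Bijective enum

/-- The number of elements of `A ∩ {1, …, N}`. -/
noncomputable def partialCount (A : Set ℕ) (N : ℕ) : ℝ :=
  ∑ n ∈ Finset.Icc 1 N, A.indicator (fun _ => (1 : ℝ)) n

/-- The lower density of a set of positive integers. -/
noncomputable def lowerDensity (A : Set ℕ) : ℝ :=
  liminf (fun N : ℕ => partialCount A N / N) atTop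

/-- The upper density of a set of positive integers. -/
noncomputable def upperDensity (A : Set ℕ) : ℝ :=
  limsup (fun N : ℕ => partialCount A N / N) atTop

/-- The (translation invariant) product metric `d̂` on `E ^ ℕ` built from a metric `d` on `E`;
it induces the product topology. -/
noncomputable def dHat {E : Type} (d : E → E → ℝ) (x y : ℕ → E) : ℝ :=
  ∑' n : ℕ, (1 / 2 : ℝ) ^ (n + 1) * (d (x n) (y n) / (1 + d (x n) (y n)))

namespace TreeSystem

variable (t : TreeSystem)

/-- The set `S(x)` of children of a vertex `x`. -/
def children (x : t.V) : Set t.V := {y | t.parent y = x ∧ t.level y = t.level x + 1}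

/-- The boundary `∂T`: the set of infinite geodesics starting at the root. -/
def Geodesic : Type := {e : ℕ → t.V // e 0 = t.root ∧ ∀ n, e (n + 1) ∈ t.children (e n)}

/-- The boundary sector `B_x` of a vertex `x`. -/
def Bx (x : t.V) : Set t.Geodesic := {e | e.1 (t.level x) = x}

/-- `𝓜ₙ`: the σ-algebra on `∂T` generated by the level-`n` boundary sectors. -/
def Mn (n : ℕ) : MeasurableSpace t.Geodesic :=
  MeasurableSpace.generateFrom {B | ∃ x, t.level x = n ∧ B = t.Bx x}

/-- The σ-algebra on `∂T` generated by `⋃ n, 𝓜ₙ`.  Its completion `𝓜` with respect to the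
measure `ℙ` is realized below via null-measurable sets. -/
instance instMeasurableSpaceGeodesic : MeasurableSpace t.Geodesic := ⨆ n, t.Mn n

/-- `pathProb q n x = ∏_{j=0}^{n-1} q(y_j, y_{j+1})` along the geodesic
`root = y_0, y_1, …, y_n = x` from the root to `x` (for a vertex `x` of level `n`). -/
def pathProb (q : t.V → t.V → ℝ) : ℕ → t.V → ℝ
  | 0, _ => 1
  | n + 1, x => pathProb q n (t.parent x) * q (t.parent x) x

/-- `h : ∂T → E` is `𝓜`-measurable, `𝓜` being the completion of `⨆ n, 𝓜ₙ` w.r.t. `ℙ`: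
preimages of open sets are in the completed σ-algebra. -/
def MMeas {E : Type} [TopologicalSpace E] (ℙ : Measure t.Geodesic)
    (h : t.Geodesic → E) : Prop :=
  ∀ V : Set E, IsOpen V → NullMeasurableSet (h ⁻¹' V) ℙ

/-- The metric `P(ψ,φ) = ∫ d(ψ e, φ e)/(1 + d(ψ e, φ e)) dℙ(e)` of `L⁰(∂T, E)`
(convergence in probability), as a pseudometric on representatives, for a metric `d` on `E`. -/
noncomputable def L0dist {E : Type} (ℙ : Measure t.Geodesic) (d : E → E → ℝ)
    (ψ φ : t.Geodesic → E) : ℝ :=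
  ∫ e, d (ψ e) (φ e) / (1 + d (ψ e) (φ e)) ∂ℙ

/-- Open subsets of `L⁰(∂T, E)`, encoded as sets of `𝓜`-measurable representatives. -/
def IsOpenL0 {E : Type} [TopologicalSpace E] (ℙ : Measure t.Geodesic) (d : E → E → ℝ)
    (V : Set (t.Geodesic → E)) : Prop :=
  (∀ ψ ∈ V, t.MMeas ℙ ψ) ∧
    ∀ ψ ∈ V, ∃ ε > 0, ∀ φ, t.MMeas ℙ φ → t.L0dist ℙ d ψ φ < ε → φ ∈ V

/-- Dense subsets of `L⁰(∂T, E)`. -/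
def DenseL0 {E : Type} [TopologicalSpace E] (ℙ : Measure t.Geodesic) (d : E → E → ℝ)
    (V : Set (t.Geodesic → E)) : Prop :=
  ∀ ψ, t.MMeas ℙ ψ → ∀ ε > 0, ∃ φ ∈ V, t.L0dist ℙ d ψ φ < ε

/-- (Generalized) harmonic functions with respect to the weights `w`:
`f(x) = ∑_{y ∈ S(x)} w(x,y) • f(y)` for every vertex `x`. -/
def Harmonic {E : Type} [AddCommMonoid E] [Module ℂ E] (w : t.V → t.V → ℂ)
    (f : t.V → E) : Prop :=
  ∀ x, f x = ∑ᶠ y ∈ t.children x, w x y • f y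

/-- The boundary values `ωₙ(f)(e) = f(z)`, `z` the unique vertex of `e` at level `n`. -/
def omega {E : Type} (f : t.V → E) (n : ℕ) : t.Geodesic → E := fun e => f (e.1 n)

/-- The metric `ρ` of pointwise convergence on `E^T` (for a metric `d` on `E`),
defined through the fixed enumeration of the vertices. -/
noncomputable def rho {E : Type} (d : E → E → ℝ) (f g : t.V → E) : ℝ :=
  ∑' n : ℕ, (1 / 2 : ℝ) ^ (n + 1) *
    (d (f (t.enum n)) (g (t.enum n)) / (1 + d (f (t.enum n)) (g (t.enum n))))

/-- A set of functions on `T` is dense in `H(T, E)`. -/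
def DenseInH {E : Type} [AddCommMonoid E] [Module ℂ E] (d : E → E → ℝ)
    (w : t.V → t.V → ℂ) (F : Set (t.V → E)) : Prop :=
  ∀ h, t.Harmonic w h → ∀ ε > 0, ∃ f ∈ F, t.rho d f h < ε

/-- Open subsets of `H(T,E)` (w.r.t. the metric `ρ`). -/
def IsOpenH {E : Type} [AddCommMonoid E] [Module ℂ E] (d : E → E → ℝ)
    (w : t.V → t.V → ℂ) (U : Set (t.V → E)) : Prop :=
  (∀ f ∈ U, t.Harmonic w f) ∧
    ∀ f ∈ U, ∃ ε > 0, ∀ g, t.Harmonic w g → t.rho d f g < ε → g ∈ U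

/-- Universal harmonic functions, `f ∈ U(T,E)`: `f` is harmonic and the sequence
`(ωₙ(f))_{n ≥ 1}` is dense in `L⁰(∂T, E)`. -/
def Universal {E : Type} [TopologicalSpace E] [AddCommMonoid E] [Module ℂ E]
    (ℙ : Measure t.Geodesic) (d : E → E → ℝ) (w : t.V → t.V → ℂ)
    (f : t.V → E) : Prop :=
  t.Harmonic w f ∧
    ∀ ψ, t.MMeas ℙ ψ → ∀ ε > 0, ∃ n, 1 ≤ n ∧ t.L0dist ℙ d (t.omega f n) ψ < ε

/-- Frequently universal harmonic functions, `f ∈ U_FM(T,E)`: for every nonempty open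
`V ⊆ L⁰(∂T,E)` the set `{n : ωₙ(f) ∈ V}` has strictly positive lower density. -/
def FreqUniversal {E : Type} [TopologicalSpace E] [AddCommMonoid E] [Module ℂ E]
    (ℙ : Measure t.Geodesic) (d : E → E → ℝ) (w : t.V → t.V → ℂ)
    (f : t.V → E) : Prop :=
  t.Harmonic w f ∧
    ∀ V : Set (t.Geodesic → E), V.Nonempty → t.IsOpenL0 ℙ d V →
      0 < lowerDensity {n | 1 ≤ n ∧ t.omega f n ∈ V}

/-- The class `X(T,E)`: harmonic `f` such that for every nonempty open `V ⊆ L⁰(∂T,E)`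
the set `{n : ωₙ(f) ∈ V}` has upper density one. -/
def ClassX {E : Type} [TopologicalSpace E] [AddCommMonoid E] [Module ℂ E]
    (ℙ : Measure t.Geodesic) (d : E → E → ℝ) (w : t.V → t.V → ℂ)
    (f : t.V → E) : Prop :=
  t.Harmonic w f ∧
    ∀ V : Set (t.Geodesic → E), V.Nonempty → t.IsOpenL0 ℙ d V →
      upperDensity {n | 1 ≤ n ∧ t.omega f n ∈ V} = 1

end TreeSystem


section Aux

open MeasureTheory Filter

/-! ### Density arithmetic -/

private lemma pc_nonneg (A : Set ℕ) (N : ℕ) : 0 ≤ partialCount A N :=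
  Finset.sum_nonneg fun n _ => Set.indicator_nonneg (fun _ _ => zero_le_one) n

private lemma pc_le (A : Set ℕ) (N : ℕ) : partialCount A N ≤ N := by
  calc partialCount A N ≤ ∑ n ∈ Finset.Icc 1 N, (1 : ℝ) :=
        Finset.sum_le_sum fun n _ => Set.indicator_le_self' (fun _ _ => zero_le_one) n
    _ = N := by simp [Nat.card_Icc]

private lemma ratio_nonneg (A : Set ℕ) (N : ℕ) : 0 ≤ partialCount A N / N :=
  div_nonneg (pc_nonneg A N) (Nat.cast_nonneg N)

private lemma ratio_le_one (A : Set ℕ) (N : ℕ) : partialCount A N / N ≤ 1 := by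
  rcases Nat.eq_zero_or_pos N with h | h
  · simp [h, partialCount]
  · rw [div_le_one (by exact_mod_cast h)]; exact pc_le A N

private lemma bddA (A : Set ℕ) :
    IsBoundedUnder (· ≤ ·) atTop (fun N : ℕ => partialCount A N / N) :=
  isBoundedUnder_of ⟨1, fun N => ratio_le_one A N⟩

private lemma bddB (A : Set ℕ) :
    IsBoundedUnder (· ≥ ·) atTop (fun N : ℕ => partialCount A N / N) :=
  isBoundedUnder_of ⟨0, fun N => ratio_nonneg A N⟩

private lemma pc_disj_le {A B : Set ℕ} (h : ∀ n, n ∈ A → n ∉ B) (N : ℕ) :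
    partialCount A N + partialCount B N ≤ N := by
  rw [partialCount, partialCount, ← Finset.sum_add_distrib]
  calc (∑ n ∈ Finset.Icc 1 N,
        (A.indicator (fun _ => (1:ℝ)) n + B.indicator (fun _ => (1:ℝ)) n))
      ≤ ∑ n ∈ Finset.Icc 1 N, (1 : ℝ) := by
        refine Finset.sum_le_sum fun n _ => ?_
        by_cases hA : n ∈ A
        · simp [Set.indicator_of_mem hA, Set.indicator_of_notMem (h n hA)]
        · have := Set.indicator_le_self' (f := fun _ => (1:ℝ))
            (fun _ _ => zero_le_one) n (s := B)
          simp only [Set.indicator_of_notMem hA]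
          simpa using this
    _ = N := by simp [Nat.card_Icc]

private lemma pc_cover_ge {A B : Set ℕ} (h : ∀ n, 1 ≤ n → n ∈ A ∨ n ∈ B) (N : ℕ) :
    (N : ℝ) ≤ partialCount A N + partialCount B N := by
  rw [partialCount, partialCount, ← Finset.sum_add_distrib]
  calc (N : ℝ) = ∑ n ∈ Finset.Icc 1 N, (1 : ℝ) := by simp [Nat.card_Icc]
    _ ≤ _ := by
        refine Finset.sum_le_sum fun n hn => ?_
        rcases h n (Finset.mem_Icc.mp hn).1 with hA | hB
        · have : (0:ℝ) ≤ B.indicator (fun _ => (1:ℝ)) n :=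
            Set.indicator_nonneg (fun _ _ => zero_le_one) n
          simp [Set.indicator_of_mem hA]; linarith
        · have : (0:ℝ) ≤ A.indicator (fun _ => (1:ℝ)) n :=
            Set.indicator_nonneg (fun _ _ => zero_le_one) n
          simp [Set.indicator_of_mem hB]; linarith

private lemma lower_of_upper {A B : Set ℕ} (h : ∀ n, n ∈ A → n ∉ B)
    (hB : upperDensity B = 1) : lowerDensity A = 0 := by
  have hge : 0 ≤ lowerDensity A :=
    le_liminf_of_le (bddA A).isCoboundedUnder_ge (Eventually.of_forall (ratio_nonneg A))
  have hle : ∀ ε : ℝ, 0 < ε → lowerDensity A ≤ ε := by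
    intro ε hε
    have h1 : (1 - ε : ℝ) < upperDensity B := by rw [hB]; linarith
    have h2 : ∃ᶠ N in atTop, (1 - ε : ℝ) < partialCount B N / N :=
      frequently_lt_of_lt_limsup (bddB B).isCoboundedUnder_le h1
    refine liminf_le_of_frequently_le ?_ (bddB A)
    refine (h2.and_eventually (eventually_ge_atTop 1)).mono ?_
    rintro N ⟨hN, hN1⟩
    have hNpos : (0:ℝ) < N := by exact_mod_cast hN1
    have hsum : partialCount A N / N + partialCount B N / N ≤ 1 := by
      rw [← add_div, div_le_one hNpos]; exact pc_disj_le h N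
    linarith
  have hle0 : lowerDensity A ≤ 0 := by
    by_contra hpos
    push_neg at hpos
    linarith [hle (lowerDensity A / 2) (by linarith)]
  linarith

private lemma upper_of_lower {A B : Set ℕ} (h : ∀ n, 1 ≤ n → n ∈ A ∨ n ∈ B)
    (hB : lowerDensity B = 0) : upperDensity A = 1 := by
  have hle : upperDensity A ≤ 1 :=
    limsup_le_of_le (bddB A).isCoboundedUnder_le (Eventually.of_forall (ratio_le_one A))
  have hge : ∀ ε : ℝ, 0 < ε → 1 - ε ≤ upperDensity A := by
    intro ε hε
    have h1 : lowerDensity B < ε := by rw [hB]; exact hε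
    have h2 : ∃ᶠ N in atTop, partialCount B N / N < ε :=
      frequently_lt_of_liminf_lt (bddA B).isCoboundedUnder_ge h1
    refine le_limsup_of_frequently_le ?_ (bddA A)
    refine (h2.and_eventually (eventually_ge_atTop 1)).mono ?_
    rintro N ⟨hN, hN1⟩
    have hNpos : (0:ℝ) < N := by exact_mod_cast hN1
    have hsum : (1:ℝ) ≤ partialCount A N / N + partialCount B N / N := by
      rw [← add_div, le_div_iff₀ hNpos, one_mul]; exact pc_cover_ge h N
    linarith
  have hge1 : 1 ≤ upperDensity A := by
    by_contra hlt
    push_neg at hlt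
    linarith [hge ((1 - upperDensity A) / 2) (by linarith)]
  linarith

private lemma lowerDensity_empty : lowerDensity (∅ : Set ℕ) = 0 := by
  have : ∀ N : ℕ, partialCount (∅ : Set ℕ) N / N = 0 := by
    intro N; simp [partialCount]
  rw [lowerDensity]
  simp only [this]
  exact liminf_const 0

/-! ### The function `t ↦ t / (1 + t)` -/

private lemma frac_triangle {a b c : ℝ} (ha : 0 ≤ a) (hb : 0 ≤ b) (hc : 0 ≤ c)
    (h : c ≤ a + b) : c / (1 + c) ≤ a / (1 + a) + b / (1 + b) := by
  have h1 : c / (1 + c) ≤ (a + b) / (1 + (a + b)) := by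
    rw [div_le_div_iff₀ (by linarith) (by linarith)]; nlinarith
  have h2 : (a + b) / (1 + (a + b)) ≤ a / (1 + a) + b / (1 + b) := by
    rw [div_add_div _ _ (by positivity) (by positivity),
      div_le_div_iff₀ (by linarith) (by positivity)]
    nlinarith [mul_nonneg ha hb, mul_nonneg (mul_nonneg ha hb) (add_nonneg ha hb)]
  linarith

/-! ### `NullMeasurable` from `MMeas`, integrability, and the `L⁰` pseudometric -/

private lemma mmeas_nullMeasurable {α E : Type} [TopologicalSpace E]
    {m : MeasurableSpace α} {μ : Measure α} {ψ : α → E}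
    [mE : MeasurableSpace E] [BorelSpace E]
    (hψ : ∀ V : Set E, IsOpen V → NullMeasurableSet (ψ ⁻¹' V) μ) :
    NullMeasurable ψ μ := by
  have h : @Measurable (NullMeasurableSpace α μ) E _
      (MeasurableSpace.generateFrom {s : Set E | IsOpen s}) ψ :=
    measurable_generateFrom (fun t ht => hψ t ht)
  intro s hs
  have hs' : MeasurableSet[MeasurableSpace.generateFrom {s : Set E | IsOpen s}] s := by
    rw [← borel]; rw [← BorelSpace.measurable_eq (α := E)]; exact hs
  exact h hs'

private lemma integ_frac {α E : Type} [MetricSpace E] [TopologicalSpace.SeparableSpace E]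
    {m : MeasurableSpace α} {μ : Measure α} [IsProbabilityMeasure μ] {ψ φ : α → E}
    (hψ : ∀ V : Set E, IsOpen V → NullMeasurableSet (ψ ⁻¹' V) μ)
    (hφ : ∀ V : Set E, IsOpen V → NullMeasurableSet (φ ⁻¹' V) μ) :
    Integrable (fun a => dist (ψ a) (φ a) / (1 + dist (ψ a) (φ a))) μ := by
  borelize E
  haveI : SecondCountableTopology E := UniformSpace.secondCountable_of_separable E
  have hψ' : AEMeasurable ψ μ := (mmeas_nullMeasurable hψ).aemeasurable
  have hφ' : AEMeasurable φ μ := (mmeas_nullMeasurable hφ).aemeasurable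
  have hd : AEMeasurable (fun a => dist (ψ a) (φ a)) μ :=
    continuous_dist.measurable.comp_aemeasurable (hψ'.prodMk hφ')
  have hm : AEStronglyMeasurable (fun a => dist (ψ a) (φ a) / (1 + dist (ψ a) (φ a))) μ :=
    (hd.div ((aemeasurable_const).add hd)).aestronglyMeasurable
  refine Integrable.mono' (integrable_const 1) hm ?_
  filter_upwards with a
  rw [Real.norm_eq_abs, abs_of_nonneg (by positivity), div_le_one (by positivity)]
  linarith [dist_nonneg (x := ψ a) (y := φ a)]

namespace TreeSystem

variable {t : TreeSystem} {E : Type} [MetricSpace E] [TopologicalSpace.SeparableSpace E]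
  {ℙ : Measure t.Geodesic} [IsProbabilityMeasure ℙ]

private lemma L0dist_nonneg (ψ φ : t.Geodesic → E) : 0 ≤ t.L0dist ℙ dist ψ φ :=
  integral_nonneg (fun e => by positivity)

private lemma L0dist_self (ψ : t.Geodesic → E) : t.L0dist ℙ dist ψ ψ = 0 := by
  simp [TreeSystem.L0dist]

private lemma L0dist_comm (ψ φ : t.Geodesic → E) :
    t.L0dist ℙ dist ψ φ = t.L0dist ℙ dist φ ψ := by
  simp [TreeSystem.L0dist, dist_comm]

private lemma L0dist_triangle {ψ φ χ : t.Geodesic → E}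
    (hψ : t.MMeas ℙ ψ) (hφ : t.MMeas ℙ φ) (hχ : t.MMeas ℙ χ) :
    t.L0dist ℙ dist ψ χ ≤ t.L0dist ℙ dist ψ φ + t.L0dist ℙ dist φ χ := by
  have h1 := integ_frac hψ hχ
  have h2 := integ_frac hψ hφ
  have h3 := integ_frac hφ hχ
  rw [TreeSystem.L0dist, TreeSystem.L0dist, TreeSystem.L0dist, ← integral_add h2 h3]
  refine integral_mono h1 (h2.add h3) ?_
  intro e
  exact frac_triangle dist_nonneg dist_nonneg dist_nonneg (dist_triangle _ _ _)

/-! ### Measurability of `ωₙ(f)` -/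

private lemma level_geo (e : t.Geodesic) : ∀ n, t.level (e.1 n) = n
  | 0 => by rw [e.2.1, t.level_root]
  | n + 1 => by rw [(e.2.2 n).2, level_geo e n]

private lemma measurableSet_Bx (x : t.V) : MeasurableSet (t.Bx x) := by
  have h : MeasurableSet[t.Mn (t.level x)] (t.Bx x) :=
    MeasurableSpace.measurableSet_generateFrom ⟨x, rfl, rfl⟩
  exact (le_iSup t.Mn (t.level x)) _ h

private lemma omega_MMeas {F : Type} [TopologicalSpace F] (f : t.V → F) (n : ℕ) :
    t.MMeas ℙ (t.omega f n) := by
  intro U hU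
  have heq : t.omega f n ⁻¹' U = ⋃ x ∈ {x : t.V | t.level x = n ∧ f x ∈ U}, t.Bx x := by
    ext e
    simp only [Set.mem_preimage, Set.mem_iUnion, TreeSystem.Bx, TreeSystem.omega,
      Set.mem_setOf_eq]
    constructor
    · intro h
      exact ⟨e.1 n, ⟨level_geo e n, h⟩, by rw [level_geo e n]⟩
    · rintro ⟨x, ⟨hx, hfx⟩, hex⟩
      rw [hx] at hex
      rw [hex]; exact hfx
  rw [heq]
  exact (Set.Finite.measurableSet_biUnion
    ((t.levels_finite n).subset (fun x hx => hx.1))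
    (fun x _ => measurableSet_Bx x)).nullMeasurableSet

end TreeSystem

end Aux

/-- A harmonic function `f ∈ H(T,E)` belongs to `X(T,E)` if and only if for
every nonempty open non-dense set `V ⊆ L⁰(∂T,E)` the set `{n : ωₙ(f) ∈ V}` has lower
density zero. -/
theorem classX_iff_lowerDensity_zero (t : TreeSystem)
    {E : Type} [MetricSpace E] [AddCommGroup E] [Module ℂ E]
    [IsTopologicalAddGroup E] [ContinuousSMul ℂ E] [TopologicalSpace.SeparableSpace E]
    (q : t.V → t.V → ℝ)
    (hq_pos : ∀ x, ∀ y ∈ t.children x, 0 < q x y)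
    (hq_sum : ∀ x, ∑ᶠ y ∈ t.children x, q x y = 1)
    (w : t.V → t.V → ℂ)
    (hw_ne : ∀ x, ∀ y ∈ t.children x, w x y ≠ 0)
    (hw_sum : ∀ x, ∑ᶠ y ∈ t.children x, w x y = 1)
    (ℙ : MeasureTheory.Measure t.Geodesic) [MeasureTheory.IsProbabilityMeasure ℙ]
    (hℙ : ∀ x, ℙ (t.Bx x) = ENNReal.ofReal (t.pathProb q (t.level x) x))
    (f : t.V → E) (hf : t.Harmonic w f) :
    t.ClassX ℙ dist w f ↔
      ∀ V : Set (t.Geodesic → E), V.Nonempty → t.IsOpenL0 ℙ dist V →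
        ¬ t.DenseL0 ℙ dist V →
        lowerDensity {n | 1 ≤ n ∧ t.omega f n ∈ V} = 0 := by
  constructor
  · -- X(T,E) ⟹ lower density zero on nonempty open non-dense sets
    rintro ⟨-, hX⟩ V hVne hVopen hVnd
    rw [TreeSystem.DenseL0] at hVnd
    push_neg at hVnd
    obtain ⟨ψ, hψm, ε, hε, hfar⟩ := hVnd
    set W : Set (t.Geodesic → E) :=
      {φ | t.MMeas ℙ φ ∧ t.L0dist ℙ dist ψ φ < ε / 2} with hW
    have hWne : W.Nonempty := ⟨ψ, hψm, by rw [TreeSystem.L0dist_self]; linarith⟩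
    have hWopen : t.IsOpenL0 ℙ dist W := by
      refine ⟨fun φ hφ => hφ.1, fun φ hφ => ?_⟩
      refine ⟨ε / 2 - t.L0dist ℙ dist ψ φ, by simpa using hφ.2, fun χ hχm hd => ?_⟩
      refine ⟨hχm, ?_⟩
      have := TreeSystem.L0dist_triangle hψm hφ.1 hχm
      linarith
    have hWup : upperDensity {n | 1 ≤ n ∧ t.omega f n ∈ W} = 1 := hX W hWne hWopen
    refine lower_of_upper (fun n hnA hnB => ?_) hWup
    have h1 := hfar _ hnA.2
    have h2 := hnB.2.2
    linarith
  · -- lower density zero ⟹ X(T,E)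
    intro h
    refine ⟨hf, fun V hVne hVopen => ?_⟩
    obtain ⟨ψ, hψV⟩ := hVne
    obtain ⟨hVmeas, hVball⟩ := hVopen
    have hψm : t.MMeas ℙ ψ := hVmeas ψ hψV
    obtain ⟨ε, hε, hball⟩ := hVball ψ hψV
    by_cases hcase : ∃ φ, t.MMeas ℙ φ ∧ ε / 2 < t.L0dist ℙ dist ψ φ
    · set W : Set (t.Geodesic → E) :=
        {φ | t.MMeas ℙ φ ∧ ε / 2 < t.L0dist ℙ dist ψ φ} with hW
      have hWne : W.Nonempty := hcase
      have hWopen : t.IsOpenL0 ℙ dist W := by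
        refine ⟨fun φ hφ => hφ.1, fun φ hφ => ?_⟩
        refine ⟨t.L0dist ℙ dist ψ φ - ε / 2, by simpa using hφ.2, fun χ hχm hd => ?_⟩
        refine ⟨hχm, ?_⟩
        have htri := TreeSystem.L0dist_triangle hψm hχm hφ.1
        rw [TreeSystem.L0dist_comm (φ := φ) (ψ := χ)] at htri
        linarith
      have hWnd : ¬ t.DenseL0 ℙ dist W := by
        intro hD
        obtain ⟨φ, hφW, hlt⟩ := hD ψ hψm (ε / 2) (by linarith)
        exact absurd hφW.2 (by linarith)
      have hWlow : lowerDensity {n | 1 ≤ n ∧ t.omega f n ∈ W} = 0 := h W hWne hWopen hWnd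
      refine upper_of_lower (fun n hn => ?_) hWlow
      by_cases hmem : t.omega f n ∈ W
      · exact Or.inr ⟨hn, hmem⟩
      · left
        refine ⟨hn, hball _ (TreeSystem.omega_MMeas f n) ?_⟩
        have : ¬ (ε / 2 < t.L0dist ℙ dist ψ (t.omega f n)) := fun hc =>
          hmem ⟨TreeSystem.omega_MMeas f n, hc⟩
        push_neg at this
        linarith
    · push_neg at hcase
      refine upper_of_lower (B := (∅ : Set ℕ)) (fun n hn => ?_) lowerDensity_empty
      left
      refine ⟨hn, hball _ (TreeSystem.omega_MMeas f n) ?_⟩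
      have := hcase (t.omega f n) (TreeSystem.omega_MMeas f n)
      linarith
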